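/- Completeness of the absorbing-region decomposition for almost-sure reactivity: let (A₁,B₁),…,(A_k,B_k) be a Streett acceptance condition of measurable subsets of S, and suppose P_μ(⋂_{i=1}^k (Fin(A_i) ∪ Inf(B_i))) = 1. Then there exist a measurable region I ⊆ S and measurable regions J₁,…,J_k with J_i ⊆ I \ A_i for each i, such that P_μ(I^ω) = 1 and for every i = 1,…,k: (1) sup_{s ∈ J_i} P_{δ_s}(σ_{A_i} < ∞) < 1, and (2) for every s ∈ I, P_{δ_s}(σ_{B_i ∪ J_i ∪ Iᶜ} < ∞) = 1. -/

import Mathlib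

open MeasureTheory ProbabilityTheory Filter Set ENNReal

/-- The one-step shift on trajectories: `shift ω n = ω (n+1)`. -/
def shift {S : Type*} (ω : ℕ → S) : ℕ → S := fun n => ω (n + 1)

/-- `Fin A`: the event of visiting `A` only finitely many times. -/
def finVisits {S : Type*} (A : Set S) : Set (ℕ → S) :=
  {ω | ∃ n, ∀ m, n ≤ m → ω m ∉ A}

/-- `Inf B`: the event of visiting `B` infinitely many times. -/
def infVisits {S : Type*} (B : Set S) : Set (ℕ → S) :=
  {ω | ∀ n, ∃ m, n ≤ m ∧ ω m ∈ B}

/-- `{σ_A < ∞}`: the event that the first return time to `A` is finite,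
where `σ_A = 1 + τ_A ∘ shift`; equivalently `∃ n, ω (n+1) ∈ A`. -/
def retEvent {S : Type*} (A : Set S) : Set (ℕ → S) := {ω | ∃ n, ω (n + 1) ∈ A}

/-- `I^ω`: the event of remaining in `I` forever. -/
def invEvent {S : Type*} (I : Set S) : Set (ℕ → S) := {ω | ∀ n, ω n ∈ I}

/-- Prepend a state to a trajectory. -/
def consTraj {S : Type*} (s : S) (ω : ℕ → S) : ℕ → S
  | 0 => s
  | n + 1 => ω n

/-- `T` is the Ionescu–Tulcea trajectory kernel of the time-homogeneous Markov chain with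
transition kernel `P`: `T s` is the law on `S^ℕ` (with the product σ-algebra) of the
coordinate Markov chain with kernel `P` started at `s`.  It is uniquely characterised
(by the Ionescu–Tulcea theorem) by the one-step Markov recursion below: the trajectory
from `s` is `s` followed by a trajectory started from a `P s`-distributed state.
The trajectory measure `P_ξ` with initial distribution `ξ` is then `ξ.bind (fun s => T s)`,
and `P_{δ_s} = T s`. -/
def IsTrajKernel {S : Type*} [MeasurableSpace S] (P : Kernel S S)
    (T : Kernel S (ℕ → S)) : Prop :=
  ∀ s : S, (T s : Measure (ℕ → S)) =
    ((P s : Measure S).bind (fun u => (T u : Measure (ℕ → S)))).map (consTraj s)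

section Construction

open MeasureTheory ProbabilityTheory Filter Set ENNReal

variable {S : Type*} [MeasurableSpace S]

lemma measurable_consTraj (s : S) : Measurable (consTraj s) := by
  apply measurable_pi_lambda
  intro n
  cases n with
  | zero => exact measurable_const
  | succ n => exact measurable_pi_apply n

lemma measurableSet_finVisits {A : Set S} (hA : MeasurableSet A) :
    MeasurableSet (finVisits A) := by
  have h : finVisits A = ⋃ n, ⋂ m, {ω : ℕ → S | n ≤ m → ω m ∉ A} := by
    ext ω; simp [finVisits]
  rw [h]
  refine MeasurableSet.iUnion fun n => MeasurableSet.iInter fun m => ?_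
  by_cases hnm : n ≤ m
  · simp only [hnm, true_implies]
    have he : {ω : ℕ → S | ω m ∉ A} = (fun ω : ℕ → S => ω m) ⁻¹' Aᶜ := rfl
    rw [he]
    exact measurable_pi_apply m hA.compl
  · simp [hnm]

lemma measurableSet_infVisits {B : Set S} (hB : MeasurableSet B) :
    MeasurableSet (infVisits B) := by
  have h : infVisits B = ⋂ n, ⋃ m, {ω : ℕ → S | n ≤ m ∧ ω m ∈ B} := by
    ext ω; simp [infVisits]
  rw [h]
  refine MeasurableSet.iInter fun n => MeasurableSet.iUnion fun m => ?_
  by_cases hnm : n ≤ m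
  · simp only [hnm, true_and]
    exact measurable_pi_apply m hB
  · simp [hnm]

lemma measurableSet_retEvent {A : Set S} (hA : MeasurableSet A) :
    MeasurableSet (retEvent A) := by
  have h : retEvent A = ⋃ n, {ω : ℕ → S | ω (n + 1) ∈ A} := by
    ext ω; simp [retEvent]
  rw [h]
  exact MeasurableSet.iUnion fun n => measurable_pi_apply (n + 1) hA

lemma measurableSet_invEvent {I : Set S} (hI : MeasurableSet I) :
    MeasurableSet (invEvent I) := by
  have h : invEvent I = ⋂ n, {ω : ℕ → S | ω n ∈ I} := by
    ext ω; simp [invEvent]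
  rw [h]
  exact MeasurableSet.iInter fun n => measurable_pi_apply n hI

lemma measurableSet_tailStay {G : Set S} (hG : MeasurableSet G) (N : ℕ) :
    MeasurableSet {ω : ℕ → S | ∀ m, ω (m + N + 1) ∈ G} := by
  have h : {ω : ℕ → S | ∀ m, ω (m + N + 1) ∈ G}
      = ⋂ m, {ω : ℕ → S | ω (m + N + 1) ∈ G} := by
    ext ω; simp
  rw [h]
  exact MeasurableSet.iInter fun m => measurable_pi_apply (m + N + 1) hG

lemma lintegral_eq_one_of_prob {ν : Measure S} [IsProbabilityMeasure ν] {f : S → ℝ≥0∞}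
    (hf : Measurable f) (hle : ∀ s, f s ≤ 1) (h : ∫⁻ s, f s ∂ν = 1) :
    ν {s | f s = 1} = 1 := by
  have hsub : ∫⁻ s, (1 - f s) ∂ν = 0 := by
    rw [lintegral_sub hf (by rw [h]; exact one_ne_top) (ae_of_all _ hle), lintegral_one,
      measure_univ, h, tsub_self]
  have hae : ∀ᵐ s ∂ν, (fun s => (1 : ℝ≥0∞) - f s) s = (0 : S → ℝ≥0∞) s :=
    (lintegral_eq_zero_iff (measurable_const.sub hf)).mp hsub
  have hone : ν {s | ¬ f s = 1} = 0 := by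
    rw [← ae_iff]
    filter_upwards [hae] with s hs
    exact le_antisymm (hle s) (tsub_eq_zero_iff_le.mp hs)
  have hms : MeasurableSet {s | f s = 1} := hf (measurableSet_singleton 1)
  rw [← prob_compl_eq_zero_iff hms]
  exact hone

lemma lintegral_eq_one_of_eq_one {ν : Measure S} [IsProbabilityMeasure ν] {f : S → ℝ≥0∞}
    (hle : ∀ s, f s ≤ 1) {I : Set S} (hI : MeasurableSet I) (hν : ν I = 1)
    (hf1 : ∀ s ∈ I, f s = 1) : ∫⁻ s, f s ∂ν = 1 := by
  refine le_antisymm ?_ ?_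
  · calc ∫⁻ s, f s ∂ν ≤ ∫⁻ _, 1 ∂ν := lintegral_mono hle
      _ = 1 := by simp
  · calc (1 : ℝ≥0∞) = ν I := hν.symm
      _ = ∫⁻ _ in I, 1 ∂ν := by simp
      _ = ∫⁻ s in I, f s ∂ν :=
        (setLIntegral_congr_fun hI (fun s hs => hf1 s hs)).symm
      _ ≤ ∫⁻ s, f s ∂ν := setLIntegral_le_lintegral _ _

variable (P : Kernel S S) [IsMarkovKernel P] (T : Kernel S (ℕ → S)) [IsMarkovKernel T]

lemma T_apply (hT : IsTrajKernel P T) (s : S) {E : Set (ℕ → S)} (hE : MeasurableSet E) :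
    T s E = ∫⁻ u, T u (consTraj s ⁻¹' E) ∂(P s) := by
  conv_lhs => rw [hT s]
  rw [Measure.map_apply (measurable_consTraj s) hE,
    Measure.bind_apply (hE.preimage (measurable_consTraj s)) T.measurable.aemeasurable]

lemma T_coord0_notMem (hT : IsTrajKernel P T) {s : S} {M : Set S} (hM : MeasurableSet M)
    (hs : s ∉ M) : T s {ω : ℕ → S | ω 0 ∈ M} = 0 := by
  have hE : MeasurableSet {ω : ℕ → S | ω 0 ∈ M} := measurable_pi_apply 0 hM
  rw [T_apply P T hT s hE]
  have hpre : consTraj s ⁻¹' {ω : ℕ → S | ω 0 ∈ M} = ∅ := by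
    ext ω
    simp only [mem_preimage, mem_setOf_eq, mem_empty_iff_false, iff_false]
    exact hs
  simp [hpre]

lemma T_inter_coord0 (hT : IsTrajKernel P T) {s : S} {M : Set S} (hM : MeasurableSet M)
    {X : Set (ℕ → S)} (hX : MeasurableSet X) :
    T s ({ω : ℕ → S | ω 0 ∈ M} ∩ X) = M.indicator (fun u => T u X) s := by
  by_cases hs : s ∈ M
  · rw [Set.indicator_of_mem hs]
    refine le_antisymm (measure_mono inter_subset_right) ?_
    have h0 : T s {ω : ℕ → S | ω 0 ∈ Mᶜ} = 0 :=
      T_coord0_notMem P T hT hM.compl (by simpa using hs)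
    calc T s X ≤ T s ({ω : ℕ → S | ω 0 ∈ M} ∩ X) + T s {ω : ℕ → S | ω 0 ∈ Mᶜ} := by
          refine le_trans (measure_mono ?_) (measure_union_le _ _)
          intro ω hω
          by_cases h : ω 0 ∈ M
          · exact Or.inl ⟨h, hω⟩
          · exact Or.inr h
      _ = T s ({ω : ℕ → S | ω 0 ∈ M} ∩ X) := by rw [h0, add_zero]
  · rw [Set.indicator_of_notMem hs]
    refine le_antisymm ?_ zero_le
    calc T s ({ω : ℕ → S | ω 0 ∈ M} ∩ X) ≤ T s {ω : ℕ → S | ω 0 ∈ M} :=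
          measure_mono inter_subset_left
      _ = 0 := T_coord0_notMem P T hT hM hs

end Construction

section Construction2

open MeasureTheory ProbabilityTheory Filter Set ENNReal Topology

set_option linter.unusedSectionVars false

variable {S : Type*} [MeasurableSpace S]
variable (P : Kernel S S) [IsMarkovKernel P] (T : Kernel S (ℕ → S)) [IsMarkovKernel T]

lemma consTraj_preimage_finVisits (s : S) (A : Set S) :
    consTraj s ⁻¹' finVisits A = finVisits A := by
  ext ω
  simp only [finVisits, mem_preimage, mem_setOf_eq]
  constructor
  · rintro ⟨n, hn⟩
    exact ⟨n, fun m hm => hn (m + 1) (le_trans hm (Nat.le_succ m))⟩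
  · rintro ⟨n, hn⟩
    refine ⟨n + 1, fun m hm => ?_⟩
    cases m with
    | zero => omega
    | succ m' => exact hn m' (by omega)

lemma consTraj_preimage_infVisits (s : S) (B : Set S) :
    consTraj s ⁻¹' infVisits B = infVisits B := by
  ext ω
  simp only [infVisits, mem_preimage, mem_setOf_eq]
  constructor
  · intro h n
    obtain ⟨m, hm, hmem⟩ := h (n + 1)
    cases m with
    | zero => omega
    | succ m' => exact ⟨m', by omega, hmem⟩
  · intro h n
    obtain ⟨m, hm, hmem⟩ := h n
    exact ⟨m + 1, by omega, hmem⟩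

/-- The core quantitative lemma: if from every state of `G` the probability of never
returning to `A` is at most `1/2`, and `G` is disjoint from `A`, then from any state the
probability of staying in `G` forever (from time 1 on) is zero. -/
lemma stay_zero (hT : IsTrajKernel P T) {G A : Set S} (hG : MeasurableSet G)
    (hA : MeasurableSet A) (hGA : ∀ u ∈ G, u ∉ A)
    (hr : ∀ u ∈ G, T u {ω : ℕ → S | ∀ m, ω (m + 1) ∉ A} ≤ 2⁻¹) (s : S) :
    T s {ω : ℕ → S | ∀ n, ω (n + 1) ∈ G} = 0 := by
  set Pre : ℕ → Set (ℕ → S) := fun t => {ω | ∀ n, n < t → ω (n + 1) ∈ G} with hPreDef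
  set Tail : ℕ → Set (ℕ → S) := fun t => {ω | ∀ m, ω (t + m + 1) ∉ A} with hTailDef
  set Stay : Set (ℕ → S) := {ω | ∀ n, ω (n + 1) ∈ G} with hStayDef
  have hPreMeas : ∀ t, MeasurableSet (Pre t) := by
    intro t
    have h : Pre t = ⋂ n, {ω : ℕ → S | n < t → ω (n + 1) ∈ G} := by
      ext ω; simp [hPreDef]
    rw [h]
    refine MeasurableSet.iInter fun n => ?_
    by_cases hn : n < t
    · simp only [hn, true_implies]
      exact measurable_pi_apply (n + 1) hG
    · simp [hn]
  have hTailMeas : ∀ t, MeasurableSet (Tail t) := by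
    intro t
    have h : Tail t = ⋂ m, (fun ω : ℕ → S => ω (t + m + 1)) ⁻¹' Aᶜ := by
      ext ω; simp [hTailDef]
    rw [h]
    exact MeasurableSet.iInter fun m => measurable_pi_apply (t + m + 1) hA.compl
  have hPsiMeas : ∀ t, MeasurableSet (Pre t ∩ Tail t) :=
    fun t => (hPreMeas t).inter (hTailMeas t)
  -- recursion identities for the preimage under `consTraj`
  have hpre_rec : ∀ (v : S) t,
      consTraj v ⁻¹' Pre (t + 1) = {ω : ℕ → S | ω 0 ∈ G} ∩ Pre t := by
    intro v t
    ext ω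
    simp only [hPreDef, mem_preimage, mem_setOf_eq, mem_inter_iff]
    constructor
    · intro h
      exact ⟨h 0 (Nat.succ_pos t), fun n hn => h (n + 1) (by omega)⟩
    · rintro ⟨h0, h⟩ n hn
      cases n with
      | zero => exact h0
      | succ n' => exact h n' (by omega)
  have hpsi_rec : ∀ (v : S) t, consTraj v ⁻¹' (Pre (t + 1) ∩ Tail (t + 1))
      = {ω : ℕ → S | ω 0 ∈ G} ∩ (Pre t ∩ Tail t) := by
    intro v t
    rw [preimage_inter, hpre_rec v t]
    have htail : consTraj v ⁻¹' Tail (t + 1) = Tail t := by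
      ext ω
      simp only [hTailDef, mem_preimage, mem_setOf_eq]
      refine forall_congr' fun m => ?_
      have hidx : consTraj v ω (t + 1 + m + 1) = ω (t + m + 1) := by
        have h1 : t + 1 + m + 1 = (t + m + 1) + 1 := by omega
        rw [h1]; rfl
      rw [hidx]
    rw [htail, inter_assoc]
  -- step identities
  have hPreStep : ∀ (v : S) t, T v (Pre (t + 1))
      = ∫⁻ u, G.indicator (fun u => T u (Pre t)) u ∂(P v) := by
    intro v t
    rw [T_apply P T hT v (hPreMeas (t + 1))]
    refine lintegral_congr fun u => ?_
    rw [hpre_rec v t, T_inter_coord0 P T hT hG (hPreMeas t)]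
  have hPsiStep : ∀ (v : S) t, T v (Pre (t + 1) ∩ Tail (t + 1))
      = ∫⁻ u, G.indicator (fun u => T u (Pre t ∩ Tail t)) u ∂(P v) := by
    intro v t
    rw [T_apply P T hT v (hPsiMeas (t + 1))]
    refine lintegral_congr fun u => ?_
    rw [hpsi_rec v t, T_inter_coord0 P T hT hG (hPsiMeas t)]
  -- the inductive step
  have step : ∀ (v : S) (t : ℕ),
      (∀ u ∈ G, T u (Pre t ∩ Tail t) ≤ 2⁻¹ * T u (Pre t)) →
      T v (Pre (t + 1) ∩ Tail (t + 1)) ≤ 2⁻¹ * T v (Pre (t + 1)) := by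
    intro v t ih
    rw [hPsiStep v t, hPreStep v t,
      ← lintegral_const_mul 2⁻¹ ((T.measurable_coe (hPreMeas t)).indicator hG)]
    refine lintegral_mono fun u => ?_
    by_cases hu : u ∈ G
    · rw [Set.indicator_of_mem hu, Set.indicator_of_mem hu]
      exact ih u hu
    · rw [Set.indicator_of_notMem hu, Set.indicator_of_notMem hu, mul_zero]
  -- claim A by induction
  have claimA : ∀ t, ∀ u ∈ G, T u (Pre t ∩ Tail t) ≤ 2⁻¹ * T u (Pre t) := by
    intro t
    induction t with
    | zero =>
      intro u hu
      have h0 : Pre 0 = univ := by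
        ext ω; simp [hPreDef]
      have h1 : Tail 0 = {ω : ℕ → S | ∀ m, ω (m + 1) ∉ A} := by
        ext ω; simp [hTailDef]
      rw [h0, h1, univ_inter, measure_univ, mul_one]
      exact hr u hu
    | succ t ih =>
      intro u _
      exact step u t ih
  -- Stay is contained in every Pre t ∩ Tail t
  have claimB : ∀ t, Stay ⊆ Pre t ∩ Tail t := by
    intro t ω hω
    exact ⟨fun n _ => hω n, fun m => hGA _ (hω (t + m))⟩
  -- continuity from above
  have hInter : ⋂ t, Pre t = Stay := by
    ext ω
    simp only [mem_iInter, hPreDef, hStayDef, mem_setOf_eq]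
    constructor
    · intro h n
      exact h (n + 1) n (Nat.lt_succ_self n)
    · intro h t n _
      exact h n
  have hAnti : Antitone Pre := by
    intro t t' htt' ω hω n hn
    exact hω n (lt_of_lt_of_le hn htt')
  have hTend : Tendsto (fun t => T s (Pre t)) atTop (𝓝 (T s Stay)) := by
    rw [← hInter]
    exact tendsto_measure_iInter_atTop (fun t => (hPreMeas t).nullMeasurableSet) hAnti
      ⟨0, measure_ne_top _ _⟩
  have key : ∀ t, T s Stay ≤ 2⁻¹ * T s (Pre (t + 1)) := by
    intro t
    exact le_trans (measure_mono (claimB (t + 1))) (step s t (claimA t))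
  have hcomp : Tendsto (fun t => T s (Pre (t + 1))) atTop (𝓝 (T s Stay)) :=
    hTend.comp (tendsto_add_atTop_nat 1)
  have hlim : Tendsto (fun t => 2⁻¹ * T s (Pre (t + 1))) atTop (𝓝 (2⁻¹ * T s Stay)) :=
    ENNReal.Tendsto.const_mul hcomp (Or.inr (by norm_num))
  have hhalf : T s Stay ≤ 2⁻¹ * T s Stay := ge_of_tendsto' hlim key
  by_contra h0
  have hlt : 2⁻¹ * T s Stay < T s Stay := by
    have := ENNReal.half_lt_self h0 (measure_ne_top _ _)
    rwa [ENNReal.div_eq_inv_mul] at this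
  exact absurd (lt_of_le_of_lt hhalf hlt) (lt_irrefl _)

/-- Shifted version of `stay_zero`. -/
lemma stay_zero_shift (hT : IsTrajKernel P T) {G A : Set S} (hG : MeasurableSet G)
    (hA : MeasurableSet A) (hGA : ∀ u ∈ G, u ∉ A)
    (hr : ∀ u ∈ G, T u {ω : ℕ → S | ∀ m, ω (m + 1) ∉ A} ≤ 2⁻¹) (N : ℕ) (s : S) :
    T s {ω : ℕ → S | ∀ m, ω (m + N + 1) ∈ G} = 0 := by
  induction N generalizing s with
  | zero =>
    have h : {ω : ℕ → S | ∀ m, ω (m + 0 + 1) ∈ G} = {ω : ℕ → S | ∀ n, ω (n + 1) ∈ G} := by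
      ext ω; simp
    rw [h]
    exact stay_zero P T hT hG hA hGA hr s
  | succ N ih =>
    have hmeas : MeasurableSet {ω : ℕ → S | ∀ m, ω (m + (N + 1) + 1) ∈ G} := by
      have h : {ω : ℕ → S | ∀ m, ω (m + (N + 1) + 1) ∈ G}
          = ⋂ m, (fun ω : ℕ → S => ω (m + (N + 1) + 1)) ⁻¹' G := by
        ext ω; simp
      rw [h]
      exact MeasurableSet.iInter fun m => measurable_pi_apply _ hG
    rw [T_apply P T hT s hmeas]
    have hpre : consTraj s ⁻¹' {ω : ℕ → S | ∀ m, ω (m + (N + 1) + 1) ∈ G}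
        = {ω : ℕ → S | ∀ m, ω (m + N + 1) ∈ G} := by
      ext ω
      simp only [mem_preimage, mem_setOf_eq]
      refine forall_congr' fun m => ?_
      have hidx : consTraj s ω (m + (N + 1) + 1) = ω (m + N + 1) := by
        have h1 : m + (N + 1) + 1 = (m + N + 1) + 1 := by omega
        rw [h1]; rfl
      rw [hidx]
    rw [hpre]
    simp [ih]

end Construction2

/-- completeness of the absorbing-region decomposition for almost-sure
reactivity.  If `P_μ(⋂ i, Fin(Aᵢ) ∪ Inf(Bᵢ)) = 1`, then there exist a measurable
region `I` with `P_μ(I^ω) = 1` and measurable regions `Jᵢ ⊆ I \ Aᵢ` satisfying the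
two obligations of the decomposition. -/
theorem absorbing_region_decomposition_complete
    {S : Type*} [MeasurableSpace S]
    (P : Kernel S S) [IsMarkovKernel P]
    (T : Kernel S (ℕ → S)) [IsMarkovKernel T] (hT : IsTrajKernel P T)
    (μ : Measure S) [IsProbabilityMeasure μ]
    (k : ℕ) (A B : Fin k → Set S)
    (hA : ∀ i, MeasurableSet (A i)) (hB : ∀ i, MeasurableSet (B i))
    (has : (μ.bind (fun s => (T s : Measure (ℕ → S))))
      (⋂ i, finVisits (A i) ∪ infVisits (B i)) = 1) :
    ∃ (I : Set S) (J : Fin k → Set S),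
      MeasurableSet I ∧
      (∀ i, MeasurableSet (J i)) ∧
      (∀ i, J i ⊆ I \ A i) ∧
      (μ.bind (fun s => (T s : Measure (ℕ → S)))) (invEvent I) = 1 ∧
      (∀ i, (⨆ s ∈ J i, T s (retEvent (A i))) < 1) ∧
      (∀ i, ∀ s ∈ I, T s (retEvent (B i ∪ J i ∪ Iᶜ)) = 1) := by
  classical
  set E : Set (ℕ → S) := ⋂ i, finVisits (A i) ∪ infVisits (B i) with hEdef
  have hEmeas : MeasurableSet E :=
    MeasurableSet.iInter fun i =>
      (measurableSet_finVisits (hA i)).union (measurableSet_infVisits (hB i))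
  have hEpre : ∀ s : S, consTraj s ⁻¹' E = E := by
    intro s
    simp only [hEdef, preimage_iInter, preimage_union, consTraj_preimage_finVisits,
      consTraj_preimage_infVisits]
  set I : Set S := {s | T s E = 1} with hIdef
  have hfmeas : Measurable fun s => T s E := T.measurable_coe hEmeas
  have hImeas : MeasurableSet I := hfmeas (measurableSet_singleton 1)
  have hbind : ∀ (X : Set (ℕ → S)), MeasurableSet X →
      (μ.bind fun s => (T s : Measure (ℕ → S))) X = ∫⁻ s, T s X ∂μ := by
    intro X hX
    exact Measure.bind_apply hX T.measurable.aemeasurable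
  have hμI : μ I = 1 := by
    apply lintegral_eq_one_of_prob hfmeas (fun s => prob_le_one)
    rw [← hbind E hEmeas]
    exact has
  have hTE : ∀ s, T s E = ∫⁻ u, T u E ∂(P s) := by
    intro s
    rw [T_apply P T hT s hEmeas, hEpre s]
  have hPsI : ∀ s ∈ I, P s I = 1 := by
    intro s hs
    apply lintegral_eq_one_of_prob hfmeas (fun u => prob_le_one)
    rw [← hTE s]
    exact hs
  have hcoord : ∀ n, ∀ s ∈ I, T s {ω : ℕ → S | ω n ∈ I} = 1 := by
    intro n
    induction n with
    | zero =>
      intro s hs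
      have h := T_inter_coord0 P T hT (s := s) hImeas (MeasurableSet.univ (α := ℕ → S))
      rw [inter_univ] at h
      rw [h, Set.indicator_of_mem hs]
      exact measure_univ
    | succ n ih =>
      intro s hs
      have hm : MeasurableSet {ω : ℕ → S | ω (n + 1) ∈ I} :=
        measurable_pi_apply (n + 1) hImeas
      rw [T_apply P T hT s hm]
      have hpre : consTraj s ⁻¹' {ω : ℕ → S | ω (n + 1) ∈ I} = {ω : ℕ → S | ω n ∈ I} := rfl
      rw [hpre]
      exact lintegral_eq_one_of_eq_one (fun u => prob_le_one) hImeas (hPsI s hs) ih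
  have hinv : ∀ s ∈ I, T s (invEvent I) = 1 := by
    intro s hs
    have hinvm : MeasurableSet (invEvent I) := measurableSet_invEvent hImeas
    rw [← prob_compl_eq_zero_iff hinvm]
    have hcompl : (invEvent I)ᶜ = ⋃ n, {ω : ℕ → S | ω n ∈ I}ᶜ := by
      ext ω; simp [invEvent]
    rw [hcompl]
    refine measure_iUnion_null fun n => ?_
    have hm : MeasurableSet {ω : ℕ → S | ω n ∈ I} := measurable_pi_apply n hImeas
    rw [measure_compl hm (measure_ne_top _ _), hcoord n s hs, measure_univ, tsub_self]
  have hbindinv : (μ.bind fun s => (T s : Measure (ℕ → S))) (invEvent I) = 1 := by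
    rw [hbind _ (measurableSet_invEvent hImeas)]
    exact lintegral_eq_one_of_eq_one (fun s => prob_le_one) hImeas hμI hinv
  set J : Fin k → Set S :=
    fun i => (I ∩ (A i)ᶜ) ∩ (fun s => T s (retEvent (A i))) ⁻¹' (Iic 2⁻¹) with hJdef
  have hJmeas : ∀ i, MeasurableSet (J i) := fun i =>
    (hImeas.inter (hA i).compl).inter
      ((T.measurable_coe (measurableSet_retEvent (hA i))) measurableSet_Iic)
  refine ⟨I, J, hImeas, hJmeas, ?_, hbindinv, ?_, ?_⟩
  · intro i s hs
    exact ⟨hs.1.1, hs.1.2⟩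
  · intro i
    refine lt_of_le_of_lt (iSup₂_le fun s hs => ?_) (ENNReal.inv_lt_one.mpr one_lt_two)
    exact hs.2
  · intro i s hs
    set C : Set S := B i ∪ J i ∪ Iᶜ with hCdef
    have hCmeas : MeasurableSet C := ((hB i).union (hJmeas i)).union hImeas.compl
    have hRmeas : MeasurableSet (retEvent C) := measurableSet_retEvent hCmeas
    set G : Set S := I \ (A i ∪ B i ∪ J i) with hGdef
    have hGmeas : MeasurableSet G := hImeas.diff (((hA i).union (hB i)).union (hJmeas i))
    have hGA : ∀ u ∈ G, u ∉ A i := fun u hu ha => hu.2 (Or.inl (Or.inl ha))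
    have hr : ∀ u ∈ G, T u {ω : ℕ → S | ∀ m, ω (m + 1) ∉ A i} ≤ 2⁻¹ := by
      intro u hu
      have huI : u ∈ I := hu.1
      have huA : u ∉ A i := fun h => hu.2 (Or.inl (Or.inl h))
      have huJ : u ∉ J i := fun h => hu.2 (Or.inr h)
      have hgt : ¬ T u (retEvent (A i)) ≤ 2⁻¹ := fun hle => huJ ⟨⟨huI, huA⟩, hle⟩
      have hge : 2⁻¹ ≤ T u (retEvent (A i)) := (not_le.mp hgt).le
      have hcmpl : {ω : ℕ → S | ∀ m, ω (m + 1) ∉ A i} = (retEvent (A i))ᶜ := by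
        ext ω; simp [retEvent]
      rw [hcmpl, measure_compl (measurableSet_retEvent (hA i)) (measure_ne_top _ _),
        measure_univ, tsub_le_iff_right]
      calc (1 : ℝ≥0∞) = 2⁻¹ + 2⁻¹ := ENNReal.inv_two_add_inv_two.symm
        _ ≤ 2⁻¹ + T u (retEvent (A i)) := add_le_add le_rfl hge
    have hstay : ∀ N, T s {ω : ℕ → S | ∀ m, ω (m + N + 1) ∈ G} = 0 :=
      fun N => stay_zero_shift P T hT hGmeas (hA i) hGA hr N s
    have hsE : T s E = 1 := hs
    have hEc : T s Eᶜ = 0 := by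
      rw [measure_compl hEmeas (measure_ne_top _ _), measure_univ, hsE, tsub_self]
    have hsub : (retEvent C)ᶜ ∩ E ⊆ ⋃ N, {ω : ℕ → S | ∀ m, ω (m + N + 1) ∈ G} := by
      rintro ω ⟨hω1, hω2⟩
      have hD : ∀ n, ω (n + 1) ∉ C := fun n hn => hω1 ⟨n, hn⟩
      have hi : ω ∈ finVisits (A i) ∪ infVisits (B i) := mem_iInter.mp hω2 i
      rcases hi with hfin | hinf
      · obtain ⟨N, hN⟩ := hfin
        refine mem_iUnion.mpr ⟨N, fun m => ?_⟩
        have hnc : ω (m + N + 1) ∉ C := hD (m + N)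
        have hI' : ω (m + N + 1) ∈ I := by
          by_contra h
          exact hnc (Set.mem_union_right _ h)
        have hB' : ω (m + N + 1) ∉ B i := fun h =>
          hnc (Set.mem_union_left _ (Set.mem_union_left _ h))
        have hJ' : ω (m + N + 1) ∉ J i := fun h =>
          hnc (Set.mem_union_left _ (Set.mem_union_right _ h))
        have hA' : ω (m + N + 1) ∉ A i := hN (m + N + 1) (by omega)
        refine ⟨hI', fun h => ?_⟩
        rcases h with (h | h) | h
        exacts [hA' h, hB' h, hJ' h]
      · obtain ⟨m, hm, hmem⟩ := hinf 1
        cases m with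
        | zero => omega
        | succ m' => exact absurd (Set.mem_union_left _ (Set.mem_union_left _ hmem)) (hD m')
    have hnull : T s ((retEvent C)ᶜ) = 0 := by
      have h1 : T s ((retEvent C)ᶜ ∩ E) = 0 :=
        measure_mono_null hsub (measure_iUnion_null fun N => hstay N)
      have h2 : T s ((retEvent C)ᶜ) ≤ T s ((retEvent C)ᶜ ∩ E) + T s Eᶜ := by
        refine le_trans (measure_mono ?_) (measure_union_le _ _)
        intro ω hω
        by_cases h : ω ∈ E
        · exact Or.inl ⟨hω, h⟩
        · exact Or.inr h
      rw [h1, hEc, add_zero] at h2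
      exact le_antisymm h2 zero_le
    rw [← prob_compl_eq_zero_iff hRmeas]
    exact hnull
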